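/- A k-spinner with k ≥ 4, with all but three consecutive locations replaced by dead ends, simulates a deterministic fork: a 3-location 2-state gadget allowing, in one state, a traversal from the center location to the right location and from the left location to the center location (each flipping the state), with the directions reversed in the other state. -/

import Mathlib

/-- A `k`-spinner: locations `ZMod k` arranged in a cycle, states `Bool`.  In state
`false` the robot moves from any location to its clockwise neighbour (`+1`), in state
`true` to its counterclockwise neighbour (`-1`); every traversal flips the state. -/
def SpinnerStep (k : ℕ) : (Bool × ZMod k) → (Bool × ZMod k) → Prop := fun c c' =>
  c'.1 = !c.1 ∧ c'.2 = (if c.1 then c.2 - 1 else c.2 + 1)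

/-- The three consecutive locations `{0, 1, 2}` that are kept as external locations;
all other locations lead to dead ends. -/
def SpinnerExt (k : ℕ) : Set (ZMod k) := {0, 1, 2}

/-- A traversal of the gadget: a walk in the spinner from one external location to
another whose intermediate locations are all dead ends (not external). -/
def SpinnerTraversal (k : ℕ) (l : List (Bool × ZMod k)) (c₀ c₁ : Bool × ZMod k) :
    Prop :=
  l.Chain' (SpinnerStep k) ∧ l.head? = some c₀ ∧ l.getLast? = some c₁ ∧
    ∀ c ∈ (l.drop 1).dropLast, c.2 ∉ SpinnerExt k

/-- The deterministic fork (center location `1`, left `0`, right `2`): in state `false`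
it allows center→right (`1→2`) and left→center (`0→1`), each flipping the state; in
state `true` the reversed directions. -/
def ForkRel {k : ℕ} (s : Bool) (x : ZMod k) (s' : Bool) (y : ZMod k) : Prop :=
  s' = !s ∧
    ((s = false ∧ ((x = 1 ∧ y = 2) ∨ (x = 0 ∧ y = 1))) ∨
     (s = true ∧ ((x = 2 ∧ y = 1) ∨ (x = 1 ∧ y = 0))))

/-!
Every spinner step is undone by the step that follows it (the state has flipped, so the
robot moves back). Hence a walk that goes on after its first step is back at its starting
location after the second one; when that start is external, the location can be neither an
intermediate (dead-end) location nor a different endpoint. So a traversal between distinct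
external locations is a single spinner step, and on the arc `0, 1, 2` these are exactly the
fork's transitions: the two remaining steps, `2 → 3` and `0 → -1`, leave the arc as soon as
`k ≥ 4`.
-/

section Spinner

variable {k : ℕ}

theorem SpinnerStep.eq_of_spinnerStep {a b c : Bool × ZMod k} (hab : SpinnerStep k a b)
    (hbc : SpinnerStep k b c) : c = a := by
  obtain ⟨hb₁, hb₂⟩ := hab
  obtain ⟨hc₁, hc₂⟩ := hbc
  ext <;> cases ha : a.1 <;> simp_all

theorem SpinnerTraversal.spinnerStep {l : List (Bool × ZMod k)} {c₀ c₁ : Bool × ZMod k}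
    (h : SpinnerTraversal k l c₀ c₁) (h₀ : c₀.2 ∈ SpinnerExt k) (hne : c₀.2 ≠ c₁.2) :
    SpinnerStep k c₀ c₁ := by
  obtain ⟨hchain, hhead, hlast, hmid⟩ := h
  rcases l with _ | ⟨a, _ | ⟨b, _ | ⟨c, rest⟩⟩⟩
  · simp at hhead
  · simp only [List.head?_cons, List.getLast?_singleton, Option.some.injEq] at hhead hlast
    exact absurd (by rw [← hhead, hlast]) hne
  · simp only [List.head?_cons, List.getLast?_cons_cons, List.getLast?_singleton,
      Option.some.injEq] at hhead hlast
    subst hhead hlast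
    exact List.isChain_pair.1 hchain
  · simp only [List.head?_cons, Option.some.injEq] at hhead
    subst hhead
    rw [List.Chain', List.isChain_cons_cons, List.isChain_cons_cons] at hchain
    obtain ⟨hstep₁, hstep₂, -⟩ := hchain
    have hback : c = a := hstep₁.eq_of_spinnerStep hstep₂
    rcases rest with _ | ⟨d, rest⟩
    · simp only [List.getLast?_cons_cons, List.getLast?_singleton, Option.some.injEq] at hlast
      exact absurd (by rw [← hlast, hback]) hne
    · exact absurd (hback ▸ h₀) (hmid c (by simp))

theorem spinnerTraversal_pair {c₀ c₁ : Bool × ZMod k} (h : SpinnerStep k c₀ c₁) :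
    SpinnerTraversal k [c₀, c₁] c₀ c₁ :=
  ⟨List.isChain_pair.2 h, rfl, rfl, by simp⟩

theorem exists_spinnerTraversal_iff {c₀ c₁ : Bool × ZMod k} (h₀ : c₀.2 ∈ SpinnerExt k)
    (hne : c₀.2 ≠ c₁.2) : (∃ l, SpinnerTraversal k l c₀ c₁) ↔ SpinnerStep k c₀ c₁ :=
  ⟨fun ⟨_, hl⟩ => hl.spinnerStep h₀ hne, fun h => ⟨[c₀, c₁], spinnerTraversal_pair h⟩⟩

theorem natCast_mem_spinnerExt_iff {n : ℕ} (hk : 3 ≤ k) (hn : n < k) :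
    (n : ZMod k) ∈ SpinnerExt k ↔ n < 3 := by
  have cast_eq_iff (m : ℕ) (hm : m < 3) : (n : ZMod k) = m ↔ n = m := by
    rw [ZMod.natCast_eq_natCast_iff', Nat.mod_eq_of_lt hn, Nat.mod_eq_of_lt (by omega)]
  have h₀ := cast_eq_iff 0 (by norm_num)
  have h₁ := cast_eq_iff 1 (by norm_num)
  have h₂ := cast_eq_iff 2 (by norm_num)
  simp only [Nat.cast_zero, Nat.cast_one, Nat.cast_ofNat] at h₀ h₁ h₂
  simp only [SpinnerExt, Set.mem_insert_iff, Set.mem_singleton_iff, h₀, h₁, h₂]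
  omega

theorem three_notMem_spinnerExt (hk : 4 ≤ k) : (3 : ZMod k) ∉ SpinnerExt k := by
  simpa using (natCast_mem_spinnerExt_iff (n := 3) (by omega) (by omega)).not.2 (by omega)

theorem neg_one_notMem_spinnerExt (hk : 4 ≤ k) : (-1 : ZMod k) ∉ SpinnerExt k := by
  have : ((k - 1 : ℕ) : ZMod k) = -1 := by
    rw [Nat.cast_sub (by omega), ZMod.natCast_self, Nat.cast_one, zero_sub]
  rw [← this, natCast_mem_spinnerExt_iff (by omega) (by omega)]
  omega

theorem ForkRel.spinnerStep {s s' : Bool} {x y : ZMod k} (h : ForkRel s x s' y) :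
    SpinnerStep k (s, x) (s', y) := by
  obtain ⟨rfl, ⟨rfl, ⟨rfl, rfl⟩ | ⟨rfl, rfl⟩⟩ | ⟨rfl, ⟨rfl, rfl⟩ | ⟨rfl, rfl⟩⟩⟩ := h <;>
    norm_num [SpinnerStep]

theorem SpinnerStep.forkRel (hk : 4 ≤ k) {s s' : Bool} {x y : ZMod k}
    (hx : x ∈ SpinnerExt k) (hy : y ∈ SpinnerExt k) (h : SpinnerStep k (s, x) (s', y)) :
    ForkRel s x s' y := by
  obtain ⟨rfl, rfl⟩ := h
  simp only [SpinnerExt, Set.mem_insert_iff, Set.mem_singleton_iff] at hx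
  rcases hx with rfl | rfl | rfl <;> cases s <;> norm_num [ForkRel] at hy ⊢
  exacts [(neg_one_notMem_spinnerExt hk hy).elim, (three_notMem_spinnerExt hk hy).elim]

theorem spinnerStep_iff_forkRel (hk : 4 ≤ k) {s s' : Bool} {x y : ZMod k}
    (hx : x ∈ SpinnerExt k) (hy : y ∈ SpinnerExt k) :
    SpinnerStep k (s, x) (s', y) ↔ ForkRel s x s' y :=
  ⟨SpinnerStep.forkRel hk hx hy, ForkRel.spinnerStep⟩

end Spinner

/-- for `k ≥ 4`, a `k`-spinner with all but the three consecutive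
locations `0,1,2` replaced by dead ends simulates a deterministic fork: a traversal
from external `x` to a different external `y` (ignoring excursions into dead ends,
i.e. with all intermediate locations non-external) is possible exactly according to
the deterministic fork's transition relation. -/
theorem spinner_simulates_deterministic_fork (k : ℕ) (hk : 4 ≤ k)
    (s s' : Bool) (x y : ZMod k) (hx : x ∈ SpinnerExt k) (hy : y ∈ SpinnerExt k)
    (hxy : x ≠ y) :
    (∃ l, SpinnerTraversal k l (s, x) (s', y)) ↔ ForkRel s x s' y := by
  rw [exists_spinnerTraversal_iff hx hxy, spinnerStep_iff_forkRel hk hx hy]
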